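/- arXiv:2108.06804 — 2 statements merged into one kernel-verified Lean document; each statement's English description precedes it below -/
import Mathlib

section
/- Let b ≥ 2 be an integer and let (u_s)_{s≥1} be a sequence of nonempty finite words over the digit alphabet {0,…,b−1} with lengths n_s = |u_s|. Suppose that D^{b-ary}_{n_s}(u_s) → 0 as s → ∞ and that n_s / (n_1 + ⋯ + n_{s−1}) → 0 as s → ∞. Then the real number x = Σ_{i≥1} c_i b^{−i}, where c_1 c_2 c_3 … is the infinite concatenation u_1 u_2 u_3 …, is simply normal to base b. -/
open MeasureTheory Filter

noncomputable section

/-- The Gauss measure of a set `A ⊆ [0,1]`:  `μ(A) = (1/log 2) ∫_A 1/(1+x) dx`. -/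
def gaussMeasure (A : Set ℝ) : ℝ := (1 / Real.log 2) * ∫ x in A, 1 / (1 + x)

/-- Value of the finite continued fraction `[0; a₁, …, aₙ]`. -/
def cfVal : List ℕ → ℝ
  | [] => 0
  | a :: rest => 1 / (a + cfVal rest)

/-- Increment the last entry of a list. -/
def bumpLast : List ℕ → List ℕ
  | [] => []
  | [a] => [a + 1]
  | a :: b :: rest => a :: bumpLast (b :: rest)

/-- The cf-cylinder `I_{[a₁,…,aₙ]}`: the open interval with endpoints
`[0;a₁,…,aₙ]` and `[0;a₁,…,aₙ+1]`. -/
def cfCylinder (l : List ℕ) : Set ℝ :=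
  Set.Ioo (min (cfVal l) (cfVal (bumpLast l))) (max (cfVal l) (cfVal (bumpLast l)))

/-- The Gauss map `T`. -/
def gaussMap (x : ℝ) : ℝ := if x = 0 then 0 else 1 / x - ⌊1 / x⌋

/-- The continued fraction digits of `x`: `cfDigits x n` is the digit `a_{n+1}`. -/
def cfDigits (x : ℝ) (n : ℕ) : ℕ := ⌊1 / (gaussMap^[n] x)⌋₊

/-- Number of occurrences of the word `v` starting at one of the first `n` positions
of the infinite sequence `a`. -/
def occCount (a : ℕ → ℕ) (v : List ℕ) (n : ℕ) : ℕ :=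
  ((Finset.range n).filter fun j => ∀ i < v.length, a (j + i) = v.getD i 0).card

/-- cf-discrepancy of the digit sequence `a` with respect to the word `v` at length `n`. -/
def cfDiscrSeq (a : ℕ → ℕ) (v : List ℕ) (n : ℕ) : ℝ :=
  |(occCount a v n : ℝ) / n - gaussMeasure (cfCylinder v)|

/-- cf-discrepancy `D^{cf}_{v,n}(x)` of a real number `x`. -/
def cfDiscr (v : List ℕ) (n : ℕ) (x : ℝ) : ℝ := cfDiscrSeq (cfDigits x) v n

/-- Number of occurrences of `v` in the finite word `w` starting within the first
`m` positions. -/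
def cfCountW (v w : List ℕ) (m : ℕ) : ℕ :=
  ((Finset.range m).filter fun j => v <+: w.drop j).card

/-- cf-discrepancy `D^{cf}_{v,m}(w)` of a finite word `w`. -/
def cfDiscrW (v w : List ℕ) (m : ℕ) : ℝ :=
  |(cfCountW v w m : ℝ) / m - gaussMeasure (cfCylinder v)|

/-- `x` is continued fraction normal: every word of positive integers occurs in the
continued fraction expansion of the fractional part of `x` with the asymptotic
frequency given by the Gauss measure of the corresponding cylinder. -/
def CFNormal (x : ℝ) : Prop :=
  ∀ v : List ℕ, v ≠ [] → (∀ d ∈ v, 0 < d) →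
    Tendsto (fun n => (occCount (cfDigits (Int.fract x)) v n : ℝ) / n) atTop
      (nhds (gaussMeasure (cfCylinder v)))

/-- `bDigit b x j` is the `(j+1)`-st digit of the base-`b` expansion of `x ∈ [0,1)`. -/
def bDigit (b : ℕ) (x : ℝ) (j : ℕ) : ℕ := (⌊x * (b : ℝ) ^ (j + 1)⌋).toNat % b

/-- `x` is simply normal to base `b`. -/
def SimplyNormal (b : ℕ) (x : ℝ) : Prop :=
  ∀ v < b, Tendsto
    (fun n => (((Finset.range n).filter fun j => bDigit b (Int.fract x) j = v).card : ℝ) / n)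
    atTop (nhds (1 / b))

/-- Simple discrepancy `D^{b-ary}_n(x)` of the first `n` base-`b` digits of `x`. -/
def bDiscr (b : ℕ) (n : ℕ) (x : ℝ) : ℝ :=
  ⨆ v : Fin b, |(((Finset.range n).filter fun j => bDigit b x j = v.1).card : ℝ) / n - 1 / b|

/-- Simple discrepancy `D^{b-ary}_m(w)` of a finite word `w` over `{0,…,b-1}`. -/
def bDiscrW (b : ℕ) (w : List ℕ) (m : ℕ) : ℝ :=
  ⨆ v : Fin b, |((w.take m).count v.1 : ℝ) / m - 1 / b|

/-- Lévy's constant `L = π²/(12 log 2)`. -/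
def levy : ℝ := Real.pi ^ 2 / (12 * Real.log 2)

end

/-!
Write `N s = |u 0| + ⋯ + |u (s-1)|`. Among the first `N s` digits, the count of a digit `v`
differs from `N s / b` by at most `∑_{j<s} |u j| · D(u j)`, which is `o(N s)` by a weighted
Cesàro argument since `D(u j) → 0`. Between two consecutive block boundaries the error moves by
at most `|u s| = o(N s)`, so every digit has frequency `1/b`. In particular the digit `0 ≠ b - 1`
occurs infinitely often, hence `∑ c i b^{-(i+1)}` lies in `[0, 1)` and its base-`b` digits are
exactly the `c i`.
-/

open Asymptotics Finset

section Digits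

variable {b : ℕ}

theorem ofDigits_lt_one (hb : 1 < b) {d : ℕ → Fin b} (hd : ∃ i, (d i : ℕ) ≠ b - 1) :
    Real.ofDigits d < 1 := by
  obtain ⟨i, hi⟩ := hd
  have hle : ∀ k, (d k : ℕ) ≤ b - 1 := fun k => by have := (d k).isLt; omega
  rw [← Real.ofDigits_const_last_eq_one' hb]
  refine Summable.tsum_lt_tsum (i := i) (fun k => ?_) ?_ Real.summable_ofDigitsTerm
    Real.summable_ofDigitsTerm <;> unfold Real.ofDigitsTerm
  · gcongr
    exact_mod_cast hle k
  · gcongr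
    exact_mod_cast lt_of_le_of_ne (hle i) hi

theorem ofDigits_eq_add_div (d : ℕ → Fin b) :
    Real.ofDigits d = ((d 0 : ℕ) + Real.ofDigits fun i => d (i + 1)) / b := by
  rw [Real.ofDigits_eq_sum_add_ofDigits d 1]
  simp [Real.ofDigitsTerm, div_eq_inv_mul, mul_add, mul_comm]

theorem bDigit_add_div_zero {a : ℕ} (ha : a < b) {y : ℝ} (hy : y ∈ Set.Ico 0 1) :
    bDigit b ((a + y) / b) 0 = a := by
  have hb : (b : ℝ) ≠ 0 := Nat.cast_ne_zero.2 (by omega)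
  rw [bDigit, zero_add, pow_one, div_mul_cancel₀ _ hb, Int.floor_toNat, add_comm,
    Nat.floor_add_natCast hy.1, Nat.floor_eq_zero.2 hy.2, zero_add, Nat.mod_eq_of_lt ha]

theorem bDigit_add_div_succ (hb : 0 < b) (a : ℕ) {y : ℝ} (hy : 0 ≤ y) (j : ℕ) :
    bDigit b ((a + y) / b) (j + 1) = bDigit b y j := by
  have hb' : (b : ℝ) ≠ 0 := by positivity
  have hscale : (a + y) / b * (b : ℝ) ^ (j + 1 + 1) = y * (b : ℝ) ^ (j + 1) + (a * b ^ j * b : ℕ) := by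
    push_cast
    field_simp
    ring
  rw [bDigit, bDigit, hscale, Int.floor_toNat, Int.floor_toNat,
    Nat.floor_add_natCast (by positivity), Nat.add_mul_mod_self_right]

theorem bDigit_ofDigits (hb : 1 < b) {d : ℕ → Fin b} (hd : ∃ᶠ i in atTop, (d i : ℕ) ≠ b - 1)
    (j : ℕ) : bDigit b (Real.ofDigits d) j = d j := by
  have hd' : ∃ᶠ i in atTop, (d (i + 1) : ℕ) ≠ b - 1 := by
    rwa [← map_add_atTop_eq_nat 1, frequently_map] at hd
  rw [ofDigits_eq_add_div]
  cases j with
  | zero =>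
    exact bDigit_add_div_zero (d 0).isLt ⟨Real.ofDigits_nonneg _, ofDigits_lt_one hb hd'.exists⟩
  | succ j =>
    rw [bDigit_add_div_succ (by omega) _ (Real.ofDigits_nonneg _), bDigit_ofDigits hb hd' j]

end Digits

theorem abs_count_sub_div_sub_le (p : ℕ → Prop) [DecidablePred p] {b : ℝ} (hb : 1 ≤ b)
    {m n : ℕ} (hmn : m ≤ n) :
    |((Nat.count p n : ℝ) - n / b) - (Nat.count p m - m / b)| ≤ n - m := by
  obtain ⟨k, rfl⟩ := Nat.exists_eq_add_of_le hmn
  have hk : (Nat.count (fun i => p (m + i)) k : ℝ) ≤ k := by exact_mod_cast Nat.count_le _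
  have hkb : (k : ℝ) / b ≤ k := div_le_self k.cast_nonneg hb
  have hkb' : 0 ≤ (k : ℝ) / b := by positivity
  rw [Nat.count_add, Nat.cast_add, Nat.cast_add, add_div, abs_le]
  constructor <;> linarith [(Nat.count (fun i => p (m + i)) k).cast_nonneg (α := ℝ)]

theorem frequently_of_tendsto_count_div {p : ℕ → Prop} [DecidablePred p] {a : ℝ} (ha : 0 < a)
    (h : Tendsto (fun n => (Nat.count p n : ℝ) / n) atTop (nhds a)) : ∃ᶠ n in atTop, p n := by
  by_contra hfin
  rw [Nat.frequently_atTop_iff_infinite, Set.not_infinite] at hfin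
  have hle : ∀ n, (Nat.count p n : ℝ) / n ≤ (#hfin.toFinset : ℝ) / n := fun n =>
    div_le_div_of_nonneg_right (by exact_mod_cast Nat.count_le_card hfin n) n.cast_nonneg
  have := le_of_tendsto_of_tendsto' h (tendsto_const_div_atTop_nhds_zero_nat _) hle
  linarith

theorem Monotone.exists_le_lt_succ {N : ℕ → ℕ} (hN : Monotone N)
    (hN' : Tendsto N atTop atTop) {S m : ℕ} (hm : N S ≤ m) :
    ∃ s ≥ S, N s ≤ m ∧ m < N (s + 1) := by
  have hex : ∃ t, m < N t := (hN'.eventually_gt_atTop m).exists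
  have hS : S < Nat.find hex := by
    by_contra! h
    exact (Nat.find_spec hex).not_ge ((hN h).trans hm)
  obtain ⟨s, hs⟩ : ∃ s, Nat.find hex = s + 1 := ⟨Nat.find hex - 1, by omega⟩
  refine ⟨s, by omega, ?_, hs ▸ Nat.find_spec hex⟩
  exact not_lt.1 (Nat.find_min hex (by omega))

theorem isLittleO_natCast_of_isLittleO_comp {E : ℕ → ℝ} {N : ℕ → ℕ} (hN : Monotone N)
    (hN' : Tendsto N atTop atTop) (hE : ∀ m n, m ≤ n → |E n - E m| ≤ n - m)
    (hEN : (fun s => E (N s)) =o[atTop] fun s => (N s : ℝ))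
    (hgap : (fun s => (N (s + 1) : ℝ) - N s) =o[atTop] fun s => (N s : ℝ)) :
    E =o[atTop] fun n => (n : ℝ) := by
  refine isLittleO_iff.2 fun ε hε => ?_
  obtain ⟨S, hS⟩ := eventually_atTop.1 ((hEN.norm_left.add hgap).def hε)
  filter_upwards [eventually_ge_atTop (N S)] with m hm
  obtain ⟨s, hsS, hsm, hms⟩ := hN.exists_le_lt_succ hN' hm
  have hbound := hS s hsS
  have hgap_nonneg : (0 : ℝ) ≤ N (s + 1) - N s := sub_nonneg.2 (by exact_mod_cast hN s.le_succ)
  have hNm : (N s : ℝ) ≤ m := by exact_mod_cast hsm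
  have hmN : (m : ℝ) ≤ N (s + 1) := by exact_mod_cast hms.le
  simp only [Real.norm_eq_abs, Nat.abs_cast] at hbound ⊢
  rw [abs_of_nonneg (add_nonneg (abs_nonneg _) hgap_nonneg)] at hbound
  calc |E m| ≤ |E (N s)| + |E m - E (N s)| := by
        simpa using abs_add_le (E (N s)) (E m - E (N s))
    _ ≤ |E (N s)| + (N (s + 1) - N s) := by linarith [hE _ _ hsm]
    _ ≤ ε * m := hbound.trans (by gcongr)

theorem count_eq_list_count {f : ℕ → ℕ} {l : List ℕ} (h : ∀ k < l.length, f k = l.getD k 0)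
    (v : ℕ) : Nat.count (fun k => f k = v) l.length = l.count v := by
  induction l generalizing f with
  | nil => simp
  | cons a l ih =>
    have ha : f 0 = a := by simpa using h 0
    have htail : ∀ k < l.length, f (k + 1) = l.getD k 0 := fun k hk => by
      simpa using h (k + 1) (by simpa using hk)
    simp [Nat.count_succ', List.count_cons, ih htail, ha]

theorem abs_count_sub_length_div_le_bDiscrW {b : ℕ} (l : List ℕ) {v : ℕ} (hv : v < b) :
    |(l.count v : ℝ) - l.length / b| ≤ l.length * bDiscrW b l l.length := by
  have hle : |(l.count v : ℝ) / l.length - 1 / b| ≤ bDiscrW b l l.length := by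
    simpa [bDiscrW] using le_ciSup (Finite.bddAbove_range fun w : Fin b =>
      |((l.take l.length).count w.1 : ℝ) / l.length - 1 / b|) ⟨v, hv⟩
  rcases eq_or_ne l [] with rfl | hl
  · simp
  have hl' : (0 : ℝ) < l.length := by exact_mod_cast List.length_pos_iff.2 hl
  calc |(l.count v : ℝ) - l.length / b| = l.length * |(l.count v : ℝ) / l.length - 1 / b| := by
        rw [← abs_of_pos hl', ← abs_mul, abs_of_pos hl', mul_sub, mul_div_cancel₀ _ hl'.ne',
          mul_one_div]
    _ ≤ l.length * bDiscrW b l l.length := by gcongr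

section Concatenation

def concatWords (u : ℕ → List ℕ) (s : ℕ) : List ℕ := ((List.range s).map u).flatten

variable {u : ℕ → List ℕ} {c : ℕ → ℕ}

theorem concatWords_succ (s : ℕ) : concatWords u (s + 1) = concatWords u s ++ u s := by
  simp [concatWords, List.range_succ]

theorem length_concatWords (s : ℕ) :
    (concatWords u s).length = ∑ j ∈ range s, (u j).length := by
  induction s with
  | zero => rfl
  | succ s ih => rw [concatWords_succ, List.length_append, ih, sum_range_succ]

theorem count_concatWords
    (hc : ∀ s, ∀ i < (concatWords u s).length, c i = (concatWords u s).getD i 0) (v s : ℕ) :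
    Nat.count (fun i => c i = v) (∑ j ∈ range s, (u j).length) = ∑ j ∈ range s, (u j).count v := by
  induction s with
  | zero => rfl
  | succ s ih =>
    have hblock : ∀ k < (u s).length,
        c ((∑ j ∈ range s, (u j).length) + k) = (u s).getD k 0 := fun k hk => by
      have hlt : (∑ j ∈ range s, (u j).length) + k < (concatWords u (s + 1)).length := by
        rw [length_concatWords, sum_range_succ]; omega
      rw [hc _ _ hlt, concatWords_succ, List.getD_append_right _ _ _ _ (by
        rw [length_concatWords]; omega), length_concatWords, Nat.add_sub_cancel_left]
    rw [sum_range_succ, sum_range_succ, Nat.count_add, ih, count_eq_list_count hblock]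


theorem le_sum_length (hne : ∀ s, u s ≠ []) (s : ℕ) : s ≤ ∑ j ∈ range s, (u j).length := by
  simpa using card_nsmul_le_sum (range s) (fun j => (u j).length) 1
    fun j _ => List.length_pos_iff.2 (hne j)

theorem lt_of_concatWords {b : ℕ} (hne : ∀ s, u s ≠ []) (hdig : ∀ s, ∀ d ∈ u s, d < b)
    (hc : ∀ s, ∀ i < (concatWords u s).length, c i = (concatWords u s).getD i 0) (i : ℕ) :
    c i < b := by
  have hi : i < (concatWords u (i + 1)).length := by
    rw [length_concatWords]; exact le_sum_length hne (i + 1)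
  have hmem : c i ∈ concatWords u (i + 1) := by
    rw [hc _ _ hi, List.getD_eq_getElem _ _ hi]; exact List.getElem_mem hi
  obtain ⟨_, hw, hcw⟩ := List.mem_flatten.1 hmem
  obtain ⟨j, -, rfl⟩ := List.mem_map.1 hw
  exact hdig j _ hcw

theorem isLittleO_count_concatWords {b : ℕ}
    (hdisc : Tendsto (fun s => bDiscrW b (u s) (u s).length) atTop (nhds 0))
    (hN : Tendsto (fun s => ∑ j ∈ range s, (u j).length) atTop atTop)
    (hc : ∀ s, ∀ i < (concatWords u s).length, c i = (concatWords u s).getD i 0)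
    {v : ℕ} (hv : v < b) :
    (fun s => (Nat.count (fun i => c i = v) (∑ j ∈ range s, (u j).length) : ℝ)
        - (∑ j ∈ range s, (u j).length : ℕ) / b) =o[atTop]
      fun s => ((∑ j ∈ range s, (u j).length : ℕ) : ℝ) := by
  have hweighted : (fun j => ((u j).length : ℝ) * bDiscrW b (u j) (u j).length) =o[atTop]
      fun j => ((u j).length : ℝ) := by
    simpa using (isBigO_refl (fun j => ((u j).length : ℝ)) atTop).mul_isLittleO
      ((isLittleO_one_iff ℝ).2 hdisc)
  have hword : (fun j => ((u j).count v : ℝ) - (u j).length / b) =o[atTop]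
      fun j => ((u j).length : ℝ) :=
    (IsBigO.of_bound' (Eventually.of_forall fun j => (abs_count_sub_length_div_le_bDiscrW
      (u j) hv).trans (le_abs_self _))).trans_isLittleO hweighted
  have hsum := hword.sum_range (fun j => (u j).length.cast_nonneg)
    (by simpa only [Function.comp_def, Nat.cast_sum] using
      (tendsto_natCast_atTop_atTop (R := ℝ)).comp hN)
  simpa [count_concatWords hc, sum_sub_distrib, sum_div] using hsum

theorem tendsto_count_div_of_concatWords {b : ℕ} (hne : ∀ s, u s ≠ [])
    (hdisc : Tendsto (fun s => bDiscrW b (u s) (u s).length) atTop (nhds 0))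
    (hratio : Tendsto (fun s => ((u s).length : ℝ) / (∑ j ∈ range s, ((u j).length : ℝ)))
      atTop (nhds 0))
    (hc : ∀ s, ∀ i < (concatWords u s).length, c i = (concatWords u s).getD i 0)
    {v : ℕ} (hv : v < b) :
    Tendsto (fun n => (Nat.count (fun i => c i = v) n : ℝ) / n) atTop (nhds (1 / b)) := by
  set N := fun s => ∑ j ∈ range s, (u j).length
  have hN : Monotone N := fun s t hst => sum_le_sum_of_subset (range_subset_range.2 hst)
  have hN' : Tendsto N atTop atTop := tendsto_atTop_mono (le_sum_length hne) tendsto_id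
  have hgap : (fun s => (N (s + 1) : ℝ) - N s) =o[atTop] fun s => (N s : ℝ) := by
    have hpos : ∀ᶠ s in atTop, (N s : ℝ) = 0 → ((u s).length : ℝ) = 0 := by
      filter_upwards [eventually_ge_atTop 1] with s hs h0
      have : 0 < N s := Nat.lt_of_lt_of_le hs (le_sum_length hne s)
      exact absurd h0 (by positivity)
    simpa [N, sum_range_succ] using (isLittleO_iff_tendsto' hpos).2 (by simpa [N] using hratio)
  have hE := isLittleO_natCast_of_isLittleO_comp hN hN'
    (fun m n hmn => abs_count_sub_div_sub_le _ (by exact_mod_cast Nat.one_le_of_lt hv) hmn)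
    (isLittleO_count_concatWords hdisc hN' hc hv) hgap
  have hlim := ((isLittleO_iff_tendsto (by simp)).1 hE).add_const (1 / (b : ℝ))
  rw [zero_add] at hlim
  refine hlim.congr' ?_
  filter_upwards [eventually_ne_atTop 0] with n hn
  field_simp
  ring

end Concatenation

/-- concatenating base-`b` words whose simple discrepancies tend to `0`
and whose lengths are asymptotically negligible with respect to the sum of the previous
lengths yields a number simply normal to base `b`. -/
theorem simply_normal_of_concat_words (b : ℕ) (hb : 2 ≤ b) (u : ℕ → List ℕ)
    (hne : ∀ s, u s ≠ []) (hdig : ∀ s, ∀ d ∈ u s, d < b)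
    (hdisc : Tendsto (fun s => bDiscrW b (u s) (u s).length) atTop (nhds 0))
    (hratio : Tendsto
      (fun s => ((u s).length : ℝ) / (∑ j ∈ Finset.range s, ((u j).length : ℝ)))
      atTop (nhds 0))
    (c : ℕ → ℕ)
    (hc : ∀ s : ℕ, ∀ i < (((List.range s).map u).flatten).length,
      c i = (((List.range s).map u).flatten).getD i 0) :
    SimplyNormal b (∑' i : ℕ, (c i : ℝ) * ((b : ℝ) ^ (i + 1))⁻¹) := by
  have hfreq : ∀ v < b, Tendsto (fun n => (Nat.count (fun i => c i = v) n : ℝ) / n) atTop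
      (nhds (1 / b)) := fun v hv => tendsto_count_div_of_concatWords hne hdisc hratio hc hv
  set d : ℕ → Fin b := fun i => ⟨c i, lt_of_concatWords hne hdig hc i⟩
  have hx : ∑' i : ℕ, (c i : ℝ) * ((b : ℝ) ^ (i + 1))⁻¹ = Real.ofDigits d := rfl
  have hd : ∃ᶠ i in atTop, (d i : ℕ) ≠ b - 1 :=
    (frequently_of_tendsto_count_div (by positivity) (hfreq 0 (by omega))).mono
      fun i hi => by simp only [d, hi]; omega
  intro v hv
  rw [hx, Int.fract_eq_self.2 ⟨Real.ofDigits_nonneg d, ofDigits_lt_one (by omega) hd.exists⟩]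
  simpa [bDigit_ofDigits (by omega) hd, d, Nat.count_eq_card_filter_range] using hfreq v hv
end

section
/- Let (u_s)_{s≥1} be a sequence of nonempty finite words of positive integers with lengths n_s = |u_s| such that n_s / (n_1 + ⋯ + n_{s−1}) → 0 as s → ∞, and such that for every k ≥ 1, every word v of k positive integers and every ε > 0 there is s_0 with D^{cf}_{v,n_s}(u_s) < ε − (k−1)/n_s for all s ≥ s_0. Then the irrational x ∈ (0,1) whose continued fraction digit sequence a_1, a_2, … is the infinite concatenation u_1 u_2 u_3 … is continued fraction normal. -/
open MeasureTheory Filter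

/- Write `N s = |u₀ ⋯ u_{s-1}|` and let `A n` count the occurrences of `v` starting before
position `n`. The occurrences starting in block `s` differ from those inside `u s` only by the at
most `|v| - 1` that straddle the next block, so the discrepancy hypothesis says
`A (N (s+1)) - A (N s) - μ n_s = o(n_s)`, and summing gives `A (N s) - μ N s = o(N s)`.
Since `A` is `1`-Lipschitz and the gaps `n_s` are `o(N s)`, this extends from the positions
`N s` to all `n`. -/

open Finset Asymptotics Topology

theorem List.prefix_drop_iff_forall_getD {α : Type*} (d : α) {v w : List α} {r : ℕ}
    (h : r + v.length ≤ w.length) :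
    v <+: w.drop r ↔ ∀ i < v.length, w.getD (r + i) d = v.getD i d := by
  simp only [List.prefix_iff_getElem, List.length_drop, List.getElem_drop]
  constructor
  · rintro ⟨_, hv⟩ i hi
    rw [List.getD_eq_getElem _ _ (by omega), List.getD_eq_getElem _ _ hi, hv i hi]
  · intro hv
    refine ⟨by omega, fun i hi => ?_⟩
    have := hv i hi
    rwa [List.getD_eq_getElem _ _ (by omega), List.getD_eq_getElem _ _ hi, eq_comm] at this

theorem List.length_flatten_map_range {α : Type*} (u : ℕ → List α) (s : ℕ) :
    ((List.range s).map u).flatten.length = ∑ j ∈ Finset.range s, (u j).length := by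
  induction s with
  | zero => simp
  | succ s ih => simp [List.range_succ, ih, Finset.sum_range_succ]

theorem List.getD_flatten_map_range_succ {α : Type*} (u : ℕ → List α) (d : α) (s r : ℕ) :
    ((List.range (s + 1)).map u).flatten.getD (∑ j ∈ Finset.range s, (u j).length + r) d =
      (u s).getD r d := by
  rw [List.range_succ, List.map_append, List.flatten_append, List.getD_append_right _ _ _ _
    (by rw [List.length_flatten_map_range]; omega), List.length_flatten_map_range]
  simp

section Occurrences

variable (a : ℕ → ℕ) (v : List ℕ)

theorem occCount_le_self (n : ℕ) : occCount a v n ≤ n :=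
  (card_filter_le _ _).trans (card_range n).le

theorem occCount_add (m n : ℕ) :
    occCount a v (m + n) = occCount a v m + occCount (fun j => a (m + j)) v n := by
  simp only [occCount, card_filter, sum_range_add, add_assoc]

theorem abs_occCount_sub_le {m n : ℕ} (h : m ≤ n) :
    |(occCount a v n : ℝ) - occCount a v m| ≤ n - m := by
  obtain ⟨d, rfl⟩ := Nat.exists_eq_add_of_le h
  rw [occCount_add]
  push_cast
  rw [add_sub_cancel_left, add_sub_cancel_left, abs_of_nonneg (by positivity)]
  exact_mod_cast occCount_le_self _ v d

theorem occCount_sum_range (ℓ : ℕ → ℕ) (s : ℕ) :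
    occCount a v (∑ j ∈ range s, ℓ j) =
      ∑ j ∈ range s, occCount (fun r => a (∑ i ∈ range j, ℓ i + r)) v (ℓ j) := by
  induction s with
  | zero => simp [occCount]
  | succ s ih => rw [sum_range_succ, occCount_add, ih, sum_range_succ]

variable {a v} {w : List ℕ} (ha : ∀ r < w.length, a r = w.getD r 0)
include ha

theorem cfCountW_le_occCount : cfCountW v w w.length ≤ occCount a v w.length := by
  refine card_le_card fun r => ?_
  simp only [mem_filter, mem_range]
  rintro ⟨hr, hp⟩
  have hlen := hp.length_le
  rw [List.length_drop] at hlen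
  refine ⟨hr, fun i hi => ?_⟩
  rw [ha _ (by omega)]
  exact (List.prefix_drop_iff_forall_getD 0 (by omega)).1 hp i hi

theorem occCount_le_cfCountW_add :
    occCount a v w.length ≤ cfCountW v w w.length + (v.length - 1) := by
  have hsub : {j ∈ range w.length | ∀ i < v.length, a (j + i) = v.getD i 0} ⊆
      {j ∈ range w.length | v <+: w.drop j} ∪ Ico (w.length + 1 - v.length) w.length := by
    intro r
    simp only [mem_filter, mem_range, mem_union, mem_Ico]
    rintro ⟨hr, hocc⟩
    by_cases hrv : r + v.length ≤ w.length
    · refine Or.inl ⟨hr, (List.prefix_drop_iff_forall_getD 0 hrv).2 fun i hi => ?_⟩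
      rw [← ha _ (by omega)]
      exact hocc i hi
    · exact Or.inr ⟨by omega, hr⟩
  calc occCount a v w.length ≤ cfCountW v w w.length + #(Ico (w.length + 1 - v.length) w.length) :=
        (card_le_card hsub).trans (card_union_le _ _)
    _ ≤ cfCountW v w w.length + (v.length - 1) := by rw [Nat.card_Ico]; omega

omit ha in
theorem mul_cfDiscrW (m : ℕ) :
    m * cfDiscrW v w m = |(cfCountW v w m : ℝ) - gaussMeasure (cfCylinder v) * m| := by
  rcases Nat.eq_zero_or_pos m with rfl | hm
  · simp [cfCountW]
  · have hm : (0 : ℝ) < m := by exact_mod_cast hm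
    rw [cfDiscrW, ← abs_of_pos hm, ← abs_mul, abs_of_pos hm, mul_sub, mul_div_cancel₀ _ hm.ne',
      mul_comm]

theorem abs_occCount_sub_le_cfDiscrW (hv : v ≠ []) :
    |(occCount a v w.length : ℝ) - gaussMeasure (cfCylinder v) * w.length| ≤
      w.length * cfDiscrW v w w.length + (v.length - 1) := by
  have hk : 1 ≤ v.length := List.length_pos_iff.2 hv
  have hlow : (cfCountW v w w.length : ℝ) ≤ occCount a v w.length := by
    exact_mod_cast cfCountW_le_occCount ha
  have hup : (occCount a v w.length : ℝ) ≤ cfCountW v w w.length + (v.length - 1) := by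
    have := occCount_le_cfCountW_add (v := v) ha
    rw [← Nat.cast_one, ← Nat.cast_sub hk]
    exact_mod_cast this
  rw [mul_cfDiscrW]
  calc _ ≤ |(occCount a v w.length : ℝ) - cfCountW v w w.length| +
        |(cfCountW v w w.length : ℝ) - gaussMeasure (cfCylinder v) * w.length| :=
        abs_sub_le _ _ _
    _ ≤ _ := by rw [abs_of_nonneg (by linarith)]; linarith

end Occurrences

theorem isLittleO_occCount_sub_mul_length {u : ℕ → List ℕ} {a : ℕ → ℕ → ℕ} {v : List ℕ}
    (hv : v ≠ []) (ha : ∀ s, ∀ r < (u s).length, a s r = (u s).getD r 0)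
    (hdisc : ∀ ε : ℝ, 0 < ε → ∃ s₀ : ℕ, ∀ s ≥ s₀, cfDiscrW v (u s) (u s).length <
      ε - ((v.length : ℝ) - 1) / (u s).length) :
    (fun s => (occCount (a s) v (u s).length : ℝ) - gaussMeasure (cfCylinder v) * (u s).length)
      =o[atTop] fun s => ((u s).length : ℝ) := by
  refine IsLittleO.of_bound fun ε hε => ?_
  obtain ⟨s₀, hs₀⟩ := hdisc ε hε
  filter_upwards [eventually_ge_atTop s₀] with s hs
  rcases Nat.eq_zero_or_pos (u s).length with h0 | hpos
  · simp [h0, occCount]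
  have hn : (0 : ℝ) < (u s).length := by exact_mod_cast hpos
  have hdisc_s := mul_lt_mul_of_pos_left (hs₀ s hs) hn
  rw [mul_sub, mul_div_cancel₀ _ hn.ne'] at hdisc_s
  rw [Real.norm_eq_abs, Real.norm_eq_abs, abs_of_pos hn]
  linarith [abs_occCount_sub_le_cfDiscrW (ha s) hv]

theorem tendsto_div_of_isLittleO_comp_strictMono {F : ℕ → ℝ} {N : ℕ → ℕ} {L : ℝ}
    (hN : StrictMono N) (hN0 : N 0 = 0) (hF : ∀ m n, m ≤ n → |F n - F m| ≤ n - m)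
    (hgap : (fun s => (N (s + 1) : ℝ) - N s) =o[atTop] fun s => (N s : ℝ))
    (hFN : (fun s => F (N s) - L * N s) =o[atTop] fun s => (N s : ℝ)) :
    Tendsto (fun n => F n / n) atTop (𝓝 L) := by
  set σ : ℕ → ℕ := fun n => Nat.findGreatest (fun s => N s ≤ n) n
  have hσle : ∀ n, N (σ n) ≤ n := fun n =>
    Nat.findGreatest_spec (P := fun s => N s ≤ n) (Nat.zero_le n) (by simp [hN0])
  have hσlt : ∀ n, n < N (σ n + 1) := fun n => by
    by_contra! h
    exact Nat.findGreatest_is_greatest (Nat.lt_succ_self _) ((hN.id_le _).trans h) h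
  have hσ : Tendsto σ atTop atTop := tendsto_atTop_atTop.2 fun s =>
    ⟨N s, fun n hn => Nat.le_findGreatest ((hN.id_le s).trans hn) hn⟩
  have hbound : ∀ n, |F n - L * n| ≤
      |F (N (σ n)) - L * N (σ n)| + (1 + |L|) * ((N (σ n + 1) : ℝ) - N (σ n)) := fun n => by
    have hle : (N (σ n) : ℝ) ≤ n := by exact_mod_cast hσle n
    have hlt : (n : ℝ) ≤ N (σ n + 1) := by exact_mod_cast (hσlt n).le
    have hLip := hF _ _ (hσle n)
    have hL : |-(L * (n - N (σ n)))| ≤ |L| * ((N (σ n + 1) : ℝ) - N (σ n)) := by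
      rw [abs_neg, abs_mul, abs_of_nonneg (sub_nonneg.2 hle)]
      gcongr
    calc |F n - L * n| = |(F n - F (N (σ n))) + (F (N (σ n)) - L * N (σ n)) +
          -(L * (n - N (σ n)))| := by ring_nf
      _ ≤ _ := (abs_add_three _ _ _).trans (by linarith)
  have hsmall : (fun n => |F (N (σ n)) - L * N (σ n)| +
      (1 + |L|) * ((N (σ n + 1) : ℝ) - N (σ n))) =o[atTop] fun n => (n : ℝ) :=
    ((hFN.comp_tendsto hσ).norm_left.add ((hgap.comp_tendsto hσ).const_mul_left _)).trans_le
      fun n => by simpa using hσle n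
  have hlo : (fun n => F n - L * n) =o[atTop] fun n => (n : ℝ) :=
    (IsBigO.of_bound' (Eventually.of_forall fun n =>
      (hbound n).trans (le_abs_self _))).trans_isLittleO hsmall
  have hlim := hlo.tendsto_div_nhds_zero.add_const L
  rw [zero_add] at hlim
  refine hlim.congr' ?_
  filter_upwards [eventually_ne_atTop 0] with n hn
  field_simp
  ring

theorem cf_normal_of_concat_words_general (u : ℕ → List ℕ)
    (hne : ∀ s, u s ≠ [])
    (hratio : Tendsto
      (fun s => ((u s).length : ℝ) / (∑ j ∈ Finset.range s, ((u j).length : ℝ)))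
      atTop (nhds 0))
    (hdisc : ∀ v : List ℕ, v ≠ [] → (∀ d ∈ v, 0 < d) → ∀ ε : ℝ, 0 < ε →
      ∃ s₀ : ℕ, ∀ s ≥ s₀, cfDiscrW v (u s) (u s).length <
        ε - ((v.length : ℝ) - 1) / (u s).length)
    (c : ℕ → ℕ)
    (hc : ∀ s : ℕ, ∀ i < (((List.range s).map u).flatten).length,
      c i = (((List.range s).map u).flatten).getD i 0)
    (x : ℝ) (hx : x ∈ Set.Ioo (0 : ℝ) 1)
    (hxdig : ∀ n, cfDigits x n = c n) :
    CFNormal x := by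
  intro v hv hvpos
  rw [Int.fract_eq_self.2 ⟨hx.1.le, hx.2⟩, funext hxdig]
  set N : ℕ → ℕ := fun s => ∑ j ∈ range s, (u j).length
  have hℓ : ∀ s, 0 < (u s).length := fun s => List.length_pos_iff.2 (hne s)
  have hN : StrictMono N := strictMono_nat_of_lt_succ fun s => by
    simp only [N, sum_range_succ]; linarith [hℓ s]
  have hblock : ∀ s, ∀ r < (u s).length, c (N s + r) = (u s).getD r 0 := fun s r hr => by
    have hlt : N s + r < ((List.range (s + 1)).map u).flatten.length := by
      rw [List.length_flatten_map_range, sum_range_succ]; simp only [N]; omega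
    rw [hc (s + 1) _ hlt, List.getD_flatten_map_range_succ]
  have hocc := isLittleO_occCount_sub_mul_length hv hblock (hdisc v hv hvpos)
  have hsum : Tendsto (fun s => ∑ j ∈ range s, ((u j).length : ℝ)) atTop atTop :=
    tendsto_natCast_atTop_atTop.comp hN.tendsto_atTop |>.congr fun s => by simp [N]
  refine tendsto_div_of_isLittleO_comp_strictMono hN (by simp [N])
    (fun m n h => abs_occCount_sub_le c v h) ?_ ?_
  · refine ((isLittleO_iff_tendsto' ?_).2 hratio).congr (fun s => ?_) (fun s => by simp [N])
    · filter_upwards [eventually_ge_atTop 1] with s hs h0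
      exact absurd h0 (sum_pos (fun j _ => by exact_mod_cast hℓ j)
        (nonempty_range_iff.2 (by omega))).ne'
    · simp [N, sum_range_succ]
  · refine (hocc.sum_range (fun s => by positivity) hsum).congr (fun s => ?_) (fun s => by simp [N])
    rw [sum_sub_distrib, ← mul_sum, occCount_sum_range]
    simp [N]

/-- concatenating words of positive integers whose cf-discrepancies are
eventually small (in the sense below) and whose lengths are asymptotically negligible
with respect to the sum of the previous lengths yields a continued fraction normal
number. -/
theorem cf_normal_of_concat_words (u : ℕ → List ℕ)
    (hne : ∀ s, u s ≠ []) (hpos : ∀ s, ∀ d ∈ u s, 0 < d)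
    (hratio : Tendsto
      (fun s => ((u s).length : ℝ) / (∑ j ∈ Finset.range s, ((u j).length : ℝ)))
      atTop (nhds 0))
    (hdisc : ∀ v : List ℕ, v ≠ [] → (∀ d ∈ v, 0 < d) → ∀ ε : ℝ, 0 < ε →
      ∃ s₀ : ℕ, ∀ s ≥ s₀, cfDiscrW v (u s) (u s).length <
        ε - ((v.length : ℝ) - 1) / (u s).length)
    (c : ℕ → ℕ)
    (hc : ∀ s : ℕ, ∀ i < (((List.range s).map u).flatten).length,
      c i = (((List.range s).map u).flatten).getD i 0)
    (x : ℝ) (hx : x ∈ Set.Ioo (0 : ℝ) 1) (hirr : Irrational x)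
    (hxdig : ∀ n, cfDigits x n = c n) :
    CFNormal x :=
  cf_normal_of_concat_words_general u hne hratio hdisc c hc x hx hxdig
end
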